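/- arXiv:math/0502112 — 2 statements merged into one kernel-verified Lean document; each statement's English description precedes it below -/
import Mathlib

section
/- Let R̄ be a commutative local ring and d ≥ 2. There exists a sequence of pairs of distinct indices (i_1,j_1),…,(i_M,j_M) with M = (3d² − d − 2)/2, depending only on d, such that every element g ∈ SL_d(R̄) can be written as g = E_{i_1 j_1}(r_1)·E_{i_2 j_2}(r_2)⋯E_{i_M j_M}(r_M) for some r_1,…,r_M ∈ R̄. In particular SL_d(R̄) is boundedly generated by its elementary subgroups, in a fixed order of factors. -/
/-!
Gaussian elimination along a schedule fixed in advance. Suppose `g` is already the identity in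
its first `p` rows and columns, and let `n = d - p - 1`. Since `det g` is a unit and `R` is local,
column `p` has a unit entry, necessarily in a row `i ≥ p`; adding row `i` to row `p + 1` makes the
entry `(p + 1, p)` a unit. As `i` is not known in advance, the schedule reserves the `n` factors
`E_{p+1,i}` (`i ≥ p`, `i ≠ p + 1`) and uses only one of them. One factor `E_{p,p+1}` then turns
the pivot into `1`, and `n` factors `E_{i,p}` on the left and `n` factors `E_{p,i}` on the right
clear column and row `p`. This costs `3n + 1` factors, and
`∑_{n=1}^{d-1} (3n + 1) = (3d² - d - 2)/2`.

A block of elementary matrices sharing the same row (or column) index is `1 + N` with `N² = 0`,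
so all its coefficients can be chosen at once and its inverse is `1 - N`.
-/

def elem {A : Type*} [CommRing A] {d : ℕ} (i j : Fin d) (h : i ≠ j) (r : A) :
    Matrix.SpecialLinearGroup (Fin d) A :=
  ⟨Matrix.transvection i j r, Matrix.det_transvection_of_ne i j h r⟩

open Matrix Pointwise

theorem Matrix.exists_isUnit_apply_of_isUnit_det {R n : Type*} [CommRing R] [IsLocalRing R]
    [Fintype n] [DecidableEq n] {M : Matrix n n R} (hM : IsUnit M.det) (j : n) :
    ∃ i, IsUnit (M i j) := by
  rw [det_apply] at hM
  obtain ⟨σ, -, hσ⟩ := IsLocalRing.exists_of_isUnit_sum hM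
  rw [Units.smul_def, zsmul_eq_mul] at hσ
  exact ⟨σ j, IsUnit.prod_iff.mp (isUnit_of_mul_isUnit_right hσ) j (Finset.mem_univ j)⟩

theorem IsLocalRing.isUnit_add_of_not_isUnit {R : Type*} [CommRing R] [IsLocalRing R] {a b : R}
    (ha : ¬IsUnit a) (hb : IsUnit b) : IsUnit (a + b) := by
  by_contra hab
  have := IsLocalRing.nonunits_add hab (show -a ∈ nonunits R by simpa using ha)
  exact this (by simpa using hb)

theorem List.prod_map_one_add_of_mul_eq_zero {M ι : Type*} [Ring M] (l : List ι) (f : ι → M)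
    (h : ∀ i ∈ l, ∀ j ∈ l, f i * f j = 0) :
    (l.map fun i => 1 + f i).prod = 1 + (l.map f).sum := by
  induction l with
  | nil => simp
  | cons a l ih =>
    have hal : f a * (l.map f).sum = 0 := by
      rw [← List.sum_map_mul_left]
      exact List.sum_eq_zero fun x hx => by
        obtain ⟨j, hj, rfl⟩ := List.mem_map.mp hx
        exact h a (by simp) j (by simp [hj])
    rw [List.map_cons, List.prod_cons, ih fun i hi j hj => h i (by simp [hi]) j (by simp [hj])]
    simp only [List.map_cons, List.sum_cons, mul_add, add_mul, one_mul, mul_one, hal]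
    abel

namespace SLElementary

variable {R : Type*} [CommRing R] {d : ℕ}

abbrev OffDiagIndex (d : ℕ) := {p : Fin d × Fin d // p.1 ≠ p.2}

def elemAt (q : OffDiagIndex d) (r : R) : Matrix.SpecialLinearGroup (Fin d) R :=
  elem q.1.1 q.1.2 q.2 r

theorem coe_elemAt (q : OffDiagIndex d) (r : R) :
    (elemAt q r : Matrix (Fin d) (Fin d) R) = transvection q.1.1 q.1.2 r := rfl

theorem elemAt_mul_elemAt (q : OffDiagIndex d) (r s : R) :
    elemAt q r * elemAt q s = elemAt q (r + s) :=
  Subtype.ext (transvection_mul_transvection_same _ _ q.2 r s)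

@[simp]
theorem elemAt_zero (q : OffDiagIndex d) : elemAt q (0 : R) = 1 :=
  Subtype.ext (transvection_zero _ _)

theorem elemAt_neg_mul_elemAt_mul (q : OffDiagIndex d) (r : R)
    (g : Matrix.SpecialLinearGroup (Fin d) R) : elemAt q (-r) * (elemAt q r * g) = g := by
  rw [← mul_assoc, elemAt_mul_elemAt, neg_add_cancel, elemAt_zero, one_mul]

variable (R) in
def wordProducts (w : List (OffDiagIndex d)) : Set (Matrix.SpecialLinearGroup (Fin d) R) :=
  (w.map fun q => Set.range (elemAt q)).prod

@[simp]
theorem wordProducts_nil : wordProducts R ([] : List (OffDiagIndex d)) = {1} := rfl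

theorem wordProducts_cons (q : OffDiagIndex d) (w : List (OffDiagIndex d)) :
    wordProducts R (q :: w) = Set.range (elemAt q) * wordProducts R w := rfl

theorem wordProducts_append (w w' : List (OffDiagIndex d)) :
    wordProducts R (w ++ w') = wordProducts R w * wordProducts R w' := by
  simp [wordProducts]

theorem mem_wordProducts_iff {w : List (OffDiagIndex d)}
    {g : Matrix.SpecialLinearGroup (Fin d) R} :
    g ∈ wordProducts R w ↔
      ∃ r : Fin w.length → R, g = (List.ofFn fun s => elemAt w[s] (r s)).prod := by
  induction w generalizing g with
  | nil => simp
  | cons q w ih =>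
    simp only [wordProducts_cons, Set.mem_mul, Set.mem_range, ih, List.length_cons,
      Fin.exists_fin_succ_pi, List.ofFn_succ, List.prod_cons]
    constructor
    · rintro ⟨_, ⟨a, rfl⟩, _, ⟨r, rfl⟩, rfl⟩
      exact ⟨a, r, by simp⟩
    · rintro ⟨a, r, rfl⟩
      exact ⟨_, ⟨a, rfl⟩, _, ⟨r, rfl⟩, by simp⟩

theorem prod_map_elemAt_mem_wordProducts (w : List (OffDiagIndex d)) (c : OffDiagIndex d → R) :
    (w.map fun q => elemAt q (c q)).prod ∈ wordProducts R w := by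
  induction w with
  | nil => simp
  | cons q w ih => exact Set.mul_mem_mul (Set.mem_range_self (c q)) ih

theorem one_mem_wordProducts (w : List (OffDiagIndex d)) : 1 ∈ wordProducts R w := by
  simpa using prod_map_elemAt_mem_wordProducts (R := R) w 0

theorem elemAt_mem_wordProducts {q : OffDiagIndex d} {w : List (OffDiagIndex d)} (hq : q ∈ w)
    (r : R) : elemAt q r ∈ wordProducts R w := by
  classical
  induction w with
  | nil => simp at hq
  | cons a w ih =>
    rw [wordProducts_cons]
    by_cases hqa : q = a
    · subst hqa
      simpa using Set.mul_mem_mul (Set.mem_range_self r) (one_mem_wordProducts (R := R) w)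
    · simpa using Set.mul_mem_mul (Set.mem_range_self (f := elemAt a) 0)
        (ih (List.mem_of_ne_of_mem hqa hq))

theorem exists_mem_wordProducts_coe_eq (w : List (OffDiagIndex d))
    (hw : ∀ e ∈ w, ∀ e' ∈ w, e.1.2 ≠ e'.1.1) (c : OffDiagIndex d → R) :
    ∃ a ∈ wordProducts R w, (a : Matrix (Fin d) (Fin d) R) =
      1 + (w.map fun e => single e.1.1 e.1.2 (c e)).sum := by
  refine ⟨_, prod_map_elemAt_mem_wordProducts w c, ?_⟩
  rw [← Matrix.SpecialLinearGroup.coeMonoidHom_apply, map_list_prod, List.map_map]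
  exact List.prod_map_one_add_of_mul_eq_zero w _ fun e he e' he' =>
    single_mul_single_of_ne _ _ _ _ (hw e he e' he') _

theorem coe_inv_eq_one_sub {a : Matrix.SpecialLinearGroup (Fin d) R}
    {N : Matrix (Fin d) (Fin d) R} (ha : (a : Matrix (Fin d) (Fin d) R) = 1 + N)
    (hN : N * N = 0) :
    ((a⁻¹ : Matrix.SpecialLinearGroup (Fin d) R) : Matrix (Fin d) (Fin d) R) = 1 - N := by
  have hinv : (a⁻¹ : Matrix.SpecialLinearGroup (Fin d) R) * (1 + N) = 1 :=
    ha ▸ congrArg Subtype.val (inv_mul_cancel a)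
  have hsq : (1 + N) * (1 - N) = 1 := by
    rw [add_mul, one_mul, mul_sub, mul_one, hN]
    abel
  calc ((a⁻¹ : Matrix.SpecialLinearGroup (Fin d) R) : Matrix (Fin d) (Fin d) R)
      = (a⁻¹ : Matrix.SpecialLinearGroup (Fin d) R) * ((1 + N) * (1 - N)) := by
        rw [hsq, mul_one]
    _ = 1 - N := by rw [← mul_assoc, hinv, one_mul]

noncomputable def rowWord (q : Fin d) (S : Finset (Fin d)) (hS : q ∉ S) :
    List (OffDiagIndex d) :=
  S.toList.pmap (fun i hi => ⟨(q, i), hi⟩) fun i hi (hqi : q = i) =>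
    hS (hqi ▸ Finset.mem_toList.mp hi)

noncomputable def colWord (q : Fin d) (S : Finset (Fin d)) (hS : q ∉ S) :
    List (OffDiagIndex d) :=
  S.toList.pmap (fun i hi => ⟨(i, q), hi⟩) fun i hi (hiq : i = q) =>
    hS (hiq ▸ Finset.mem_toList.mp hi)

@[simp]
theorem length_rowWord (q : Fin d) (S : Finset (Fin d)) (hS : q ∉ S) :
    (rowWord q S hS).length = S.card := by
  simp [rowWord]

@[simp]
theorem length_colWord (q : Fin d) (S : Finset (Fin d)) (hS : q ∉ S) :
    (colWord q S hS).length = S.card := by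
  simp [colWord]

theorem mem_rowWord {q : Fin d} {S : Finset (Fin d)} {hS : q ∉ S} {e : OffDiagIndex d} :
    e ∈ rowWord q S hS ↔ e.1.1 = q ∧ e.1.2 ∈ S := by
  obtain ⟨⟨i, j⟩, hij⟩ := e
  simp [rowWord, eq_comm]

theorem mem_colWord {q : Fin d} {S : Finset (Fin d)} {hS : q ∉ S} {e : OffDiagIndex d} :
    e ∈ colWord q S hS ↔ e.1.2 = q ∧ e.1.1 ∈ S := by
  obtain ⟨⟨i, j⟩, hij⟩ := e
  simp [colWord, eq_comm, and_comm]

theorem exists_mem_wordProducts_rowWord (q : Fin d) (S : Finset (Fin d)) (hS : q ∉ S)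
    (x : Fin d → R) :
    ∃ a ∈ wordProducts R (rowWord q S hS),
      ((a⁻¹ : Matrix.SpecialLinearGroup (Fin d) R) : Matrix (Fin d) (Fin d) R) =
        1 - ∑ i ∈ S, single q i (x i) := by
  obtain ⟨a, ha, hcoe⟩ := exists_mem_wordProducts_coe_eq (rowWord q S hS)
    (fun e he e' he' => by
      rw [(mem_rowWord.mp he').1]
      exact fun h => hS (h ▸ (mem_rowWord.mp he).2)) fun e => x e.1.2
  refine ⟨a, ha, coe_inv_eq_one_sub ?_ ?_⟩
  · simp only [hcoe, rowWord, List.map_pmap, List.pmap_eq_map, Finset.sum_map_toList]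
  · rw [Finset.sum_mul_sum]
    exact Finset.sum_eq_zero fun i hi => Finset.sum_eq_zero fun j _ =>
      single_mul_single_of_ne _ _ _ _ (fun (h : i = q) => hS (h ▸ hi)) _

theorem exists_mem_wordProducts_colWord (q : Fin d) (S : Finset (Fin d)) (hS : q ∉ S)
    (x : Fin d → R) :
    ∃ a ∈ wordProducts R (colWord q S hS),
      ((a⁻¹ : Matrix.SpecialLinearGroup (Fin d) R) : Matrix (Fin d) (Fin d) R) =
        1 - ∑ i ∈ S, single i q (x i) := by
  obtain ⟨a, ha, hcoe⟩ := exists_mem_wordProducts_coe_eq (colWord q S hS)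
    (fun e he e' he' => by
      rw [(mem_colWord.mp he).1]
      exact fun h => hS (h ▸ (mem_colWord.mp he').2)) fun e => x e.1.1
  refine ⟨a, ha, coe_inv_eq_one_sub ?_ ?_⟩
  · simp only [hcoe, colWord, List.map_pmap, List.pmap_eq_map, Finset.sum_map_toList]
  · rw [Finset.sum_mul_sum]
    exact Finset.sum_eq_zero fun i _ => Finset.sum_eq_zero fun j hj =>
      single_mul_single_of_ne _ _ _ _ (fun (h : q = j) => hS (h ▸ hj)) _

theorem one_sub_sum_single_col_mul_apply (q : Fin d) (S : Finset (Fin d)) (x : Fin d → R)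
    (g : Matrix (Fin d) (Fin d) R) (a b : Fin d) :
    ((1 - ∑ i ∈ S, single i q (x i)) * g) a b = g a b - if a ∈ S then x a * g q b else 0 := by
  rw [Matrix.sub_mul, Matrix.one_mul, Finset.sum_mul]
  simp [Matrix.sum_apply, Matrix.mul_apply, single_apply, ite_and]

theorem mul_one_sub_sum_single_row_apply (q : Fin d) (S : Finset (Fin d)) (x : Fin d → R)
    (g : Matrix (Fin d) (Fin d) R) (a b : Fin d) :
    (g * (1 - ∑ i ∈ S, single q i (x i))) a b = g a b - if b ∈ S then g a q * x b else 0 := by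
  rw [Matrix.mul_sub, Matrix.mul_one, Finset.mul_sum]
  simp [Matrix.sum_apply, Matrix.mul_apply, single_apply, ite_and]

variable (R) in
/-- The copy of `SL_{d-p}(R)` sitting in the lower right corner. -/
def trailingBlock (p : ℕ) : Set (Matrix.SpecialLinearGroup (Fin d) R) :=
  {g | ∀ i j : Fin d, (i : ℕ) < p ∨ (j : ℕ) < p →
    (g : Matrix (Fin d) (Fin d) R) i j = (1 : Matrix (Fin d) (Fin d) R) i j}

@[simp]
theorem trailingBlock_zero :
    trailingBlock R 0 = (Set.univ : Set (Matrix.SpecialLinearGroup (Fin d) R)) :=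
  Set.eq_univ_of_forall fun _ i j hij => by omega

theorem trailingBlock_subset_one {p : ℕ} (hp : d ≤ p + 1) :
    trailingBlock R p ⊆ ({1} : Set (Matrix.SpecialLinearGroup (Fin d) R)) := by
  intro g hg
  have hoff : ∀ i j : Fin d, i ≠ j → (g : Matrix (Fin d) (Fin d) R) i j = 0 := by
    intro i j hij
    rw [hg i j (by have := Fin.val_ne_of_ne hij; omega), one_apply_ne hij]
  have hdet : ∏ i, (g : Matrix (Fin d) (Fin d) R) i i = 1 := by
    rw [← det_of_isUpperTriangular fun i j hji => hoff i j hji.ne', g.det_coe]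
  ext i j
  by_cases hij : i = j
  · subst hij
    by_cases hi : (i : ℕ) < p
    · exact hg i i (Or.inl hi)
    · rw [Matrix.SpecialLinearGroup.coe_one, one_apply_eq]
      refine (Finset.prod_eq_single_of_mem (f := fun k => (g : Matrix (Fin d) (Fin d) R) k k)
        i (Finset.mem_univ i) fun k _ hki => ?_).symm.trans hdet
      rw [hg k k (Or.inl (by have := Fin.val_ne_of_ne hki; omega)), one_apply_eq]
  · rw [hoff i j hij]
    exact (one_apply_ne hij).symm

theorem elemAt_mul_mem_trailingBlock {p : ℕ} {q : OffDiagIndex d}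
    (hq : p ≤ (q.1.1 : ℕ) ∧ p ≤ (q.1.2 : ℕ)) (r : R)
    {g : Matrix.SpecialLinearGroup (Fin d) R} (hg : g ∈ trailingBlock R p) :
    elemAt q r * g ∈ trailingBlock R p := by
  intro i j hij
  rw [Matrix.SpecialLinearGroup.coe_mul, coe_elemAt]
  by_cases hi : i = q.1.1
  · subst hi
    have hj : (j : ℕ) < p := by omega
    have hj2 : q.1.2 ≠ j := fun h => by rw [h] at hq; omega
    rw [transvection_mul_apply_same, hg _ j (Or.inr hj), hg _ j (Or.inr hj), one_apply_ne hj2,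
      mul_zero, add_zero]
  · rw [transvection_mul_apply_of_ne _ _ _ _ hi, hg i j hij]

noncomputable def pivotWord (P P1 : Fin d) (hP : P < P1) : List (OffDiagIndex d) :=
  rowWord P1 ((Finset.Ici P).erase P1) (Finset.notMem_erase _ _) ++ [⟨(P, P1), hP.ne⟩] ++
    colWord P (Finset.Ioi P) (by simp)

theorem trailingBlock_subset_mul_isUnit [IsLocalRing R] {P P1 : Fin d} (hP : P < P1) :
    trailingBlock R P ⊆
      wordProducts R (rowWord P1 ((Finset.Ici P).erase P1) (Finset.notMem_erase _ _)) *
        {g | g ∈ trailingBlock R P ∧ IsUnit ((g : Matrix (Fin d) (Fin d) R) P1 P)} := by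
  intro g hg
  obtain ⟨i₀, hi₀⟩ := exists_isUnit_apply_of_isUnit_det (g.det_coe ▸ isUnit_one) P
  have hPi₀ : P ≤ i₀ := by
    by_contra! h
    rw [hg i₀ P (Or.inl h), one_apply_ne h.ne] at hi₀
    exact not_isUnit_zero hi₀
  by_cases hu : IsUnit ((g : Matrix (Fin d) (Fin d) R) P1 P)
  · exact ⟨1, one_mem_wordProducts _, g, ⟨hg, hu⟩, one_mul g⟩
  · have hi₀P1 : i₀ ≠ P1 := by rintro rfl; exact hu hi₀
    let q : OffDiagIndex d := ⟨(P1, i₀), hi₀P1.symm⟩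
    have hq : q ∈ rowWord P1 ((Finset.Ici P).erase P1) (Finset.notMem_erase _ _) :=
      mem_rowWord.mpr ⟨rfl, by simp [q, hi₀P1, hPi₀]⟩
    refine ⟨elemAt q (-1), elemAt_mem_wordProducts hq _, elemAt q 1 * g, ⟨?_, ?_⟩, ?_⟩
    · exact elemAt_mul_mem_trailingBlock ⟨hP.le, hPi₀⟩ 1 hg
    · rw [Matrix.SpecialLinearGroup.coe_mul, coe_elemAt, transvection_mul_apply_same, one_mul]
      exact IsLocalRing.isUnit_add_of_not_isUnit hu hi₀
    · exact elemAt_neg_mul_elemAt_mul q _ g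

theorem subset_mul_apply_self_eq_one {P P1 : Fin d} (hP : P < P1) :
    {g | g ∈ trailingBlock R P ∧ IsUnit ((g : Matrix (Fin d) (Fin d) R) P1 P)} ⊆
      wordProducts R [⟨(P, P1), hP.ne⟩] *
        {g | g ∈ trailingBlock R P ∧ (g : Matrix (Fin d) (Fin d) R) P P = 1} := by
  rintro g ⟨hg, u, hu⟩
  let q : OffDiagIndex d := ⟨(P, P1), hP.ne⟩
  let t : R := (1 - (g : Matrix (Fin d) (Fin d) R) P P) * ↑u⁻¹
  refine ⟨elemAt q (-t), elemAt_mem_wordProducts (List.mem_singleton_self q) _, elemAt q t * g,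
    ⟨elemAt_mul_mem_trailingBlock (p := P) (q := q) ⟨le_rfl, hP.le⟩ t hg, ?_⟩, ?_⟩
  · rw [Matrix.SpecialLinearGroup.coe_mul, coe_elemAt, transvection_mul_apply_same]
    change (g : Matrix (Fin d) (Fin d) R) P P +
      (1 - (g : Matrix (Fin d) (Fin d) R) P P) * ↑u⁻¹ * (g : Matrix (Fin d) (Fin d) R) P1 P = 1
    rw [← hu, mul_assoc, Units.inv_mul, mul_one, add_sub_cancel]
  · exact elemAt_neg_mul_elemAt_mul q t g

theorem subset_mul_col_eq_one {P : Fin d} :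
    {g | g ∈ trailingBlock R P ∧ (g : Matrix (Fin d) (Fin d) R) P P = 1} ⊆
      wordProducts R (colWord P (Finset.Ioi P) (by simp)) *
        {g | g ∈ trailingBlock R P ∧
          ∀ i, (g : Matrix (Fin d) (Fin d) R) i P = (1 : Matrix (Fin d) (Fin d) R) i P} := by
  rintro g ⟨hg, hPP⟩
  obtain ⟨a, ha, hinv⟩ := exists_mem_wordProducts_colWord (R := R) P (Finset.Ioi P) (by simp)
    fun i => (g : Matrix (Fin d) (Fin d) R) i P
  have happly : ∀ i j,
      ((a⁻¹ * g : Matrix.SpecialLinearGroup (Fin d) R) : Matrix (Fin d) (Fin d) R) i j =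
      (g : Matrix (Fin d) (Fin d) R) i j -
        if P < i then (g : Matrix (Fin d) (Fin d) R) i P * (g : Matrix (Fin d) (Fin d) R) P j
        else 0 := fun i j => by
    rw [Matrix.SpecialLinearGroup.coe_mul, hinv, one_sub_sum_single_col_mul_apply]
    simp only [Finset.mem_Ioi]
  refine ⟨a, ha, a⁻¹ * g, ⟨fun i j hij => ?_, fun i => ?_⟩, mul_inv_cancel_left a g⟩
  · rw [happly]
    split_ifs with hi
    · rw [hg P j (by omega), one_apply_ne (by omega), mul_zero, sub_zero, hg i j hij]
    · rw [sub_zero, hg i j hij]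
  · rw [happly]
    split_ifs with hi
    · rw [hPP, mul_one, sub_self, one_apply_ne hi.ne']
    · rw [sub_zero]
      rcases (not_lt.mp hi).lt_or_eq with hi | rfl
      · exact hg i P (Or.inl hi)
      · rw [hPP, one_apply_eq]

theorem subset_trailingBlock_succ_mul {P : Fin d} :
    {g | g ∈ trailingBlock R P ∧
        ∀ i, (g : Matrix (Fin d) (Fin d) R) i P = (1 : Matrix (Fin d) (Fin d) R) i P} ⊆
      trailingBlock R (P + 1) * wordProducts R (rowWord P (Finset.Ioi P) (by simp)) := by
  rintro g ⟨hg, hcol⟩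
  obtain ⟨a, ha, hinv⟩ := exists_mem_wordProducts_rowWord (R := R) P (Finset.Ioi P) (by simp)
    fun j => (g : Matrix (Fin d) (Fin d) R) P j
  have happly : ∀ i j,
      ((g * a⁻¹ : Matrix.SpecialLinearGroup (Fin d) R) : Matrix (Fin d) (Fin d) R) i j =
      (g : Matrix (Fin d) (Fin d) R) i j -
        if P < j then (g : Matrix (Fin d) (Fin d) R) i P * (g : Matrix (Fin d) (Fin d) R) P j
        else 0 := fun i j => by
    rw [Matrix.SpecialLinearGroup.coe_mul, hinv, mul_one_sub_sum_single_row_apply]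
    simp only [Finset.mem_Ioi]
  refine ⟨g * a⁻¹, fun i j hij => ?_, a, ha, inv_mul_cancel_right g a⟩
  rw [happly]
  split_ifs with hj
  · rw [hcol]
    rcases eq_or_ne i P with rfl | hi
    · rw [one_apply_eq, one_mul, sub_self, one_apply_ne hj.ne]
    · rw [one_apply_ne hi, zero_mul, sub_zero, hg i j (by have := Fin.val_ne_of_ne hi; omega)]
  · rw [sub_zero]
    rcases (not_lt.mp hj).lt_or_eq with hj | rfl
    · exact hg i j (Or.inr hj)
    · exact hcol i

theorem trailingBlock_subset_pivotWord_mul [IsLocalRing R] {P P1 : Fin d} (hP : P < P1) :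
    trailingBlock R P ⊆ wordProducts R (pivotWord P P1 hP) * trailingBlock R (P + 1) *
      wordProducts R (rowWord P (Finset.Ioi P) (by simp)) := by
  rw [pivotWord, wordProducts_append, wordProducts_append]
  simp only [mul_assoc]
  refine (trailingBlock_subset_mul_isUnit hP).trans (Set.mul_subset_mul_left ?_)
  refine (subset_mul_apply_self_eq_one hP).trans (Set.mul_subset_mul_left ?_)
  exact subset_mul_col_eq_one.trans (Set.mul_subset_mul_left subset_trailingBlock_succ_mul)

noncomputable def reductionWord (d p : ℕ) : List (OffDiagIndex d) :=
  if h : p + 1 < d then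
    pivotWord ⟨p, by omega⟩ ⟨p + 1, h⟩ (Fin.mk_lt_mk.mpr p.lt_succ_self) ++
      reductionWord d (p + 1) ++ rowWord ⟨p, by omega⟩ (Finset.Ioi ⟨p, by omega⟩) (by simp)
  else []
termination_by d - p

theorem trailingBlock_subset_wordProducts_reductionWord [IsLocalRing R] (p : ℕ) :
    trailingBlock R p ⊆ wordProducts R (reductionWord d p) := by
  induction p using reductionWord.induct d with
  | case1 p h ih =>
    rw [reductionWord, dif_pos h, wordProducts_append, wordProducts_append]
    exact (trailingBlock_subset_pivotWord_mul (P := ⟨p, _⟩) (P1 := ⟨p + 1, h⟩) _).trans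
      (Set.mul_subset_mul_right (Set.mul_subset_mul_left ih))
  | case2 p h =>
    rw [reductionWord, dif_neg h]
    exact trailingBlock_subset_one (by omega)

theorem length_reductionWord (p : ℕ) :
    (reductionWord d p).length = (3 * (d - p) ^ 2 - (d - p) - 2) / 2 := by
  induction p using reductionWord.induct d with
  | case1 p h ih =>
    have hcard :
        ((Finset.Ici (⟨p, by omega⟩ : Fin d)).erase ⟨p + 1, h⟩).card = d - p - 1 := by
      rw [Finset.card_erase_of_mem (by simp [Fin.le_def]), Fin.card_Ici]
    rw [reductionWord, dif_pos h]
    simp only [pivotWord, List.length_append, length_rowWord, length_colWord, List.length_singleton,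
      ih, Fin.card_Ioi, hcard]
    obtain ⟨k, hk⟩ : ∃ k, d - p = k + 2 := ⟨d - p - 2, by omega⟩
    have hk' : d - (p + 1) = k + 1 := by omega
    have hsq : 3 * (k + 2) ^ 2 = 3 * (k + 1) ^ 2 + 6 * k + 9 := by ring
    have hsq' : 3 * (k + 1) ^ 2 = 3 * k ^ 2 + 6 * k + 3 := by ring
    rw [hk, hk', hsq]
    omega
  | case2 p h =>
    rw [reductionWord, dif_neg h]
    obtain h | h : d - p = 0 ∨ d - p = 1 := by omega
    all_goals simp [h]

end SLElementary

theorem bounded_elementary_generation_of_localRing_general (R : Type*) [CommRing R] [IsLocalRing R]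
    (d : ℕ) :
    ∃ f : Fin ((3 * d ^ 2 - d - 2) / 2) → {p : Fin d × Fin d // p.1 ≠ p.2},
      ∀ g : Matrix.SpecialLinearGroup (Fin d) R,
        ∃ r : Fin ((3 * d ^ 2 - d - 2) / 2) → R,
          g = (List.ofFn fun s => elem (f s).1.1 (f s).1.2 (f s).2 (r s)).prod := by
  rw [show (3 * d ^ 2 - d - 2) / 2 = (SLElementary.reductionWord d 0).length by
    rw [SLElementary.length_reductionWord, Nat.sub_zero]]
  refine ⟨fun s => (SLElementary.reductionWord d 0)[s], fun g => ?_⟩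
  have hg : g ∈ SLElementary.trailingBlock R 0 := by simp
  exact SLElementary.mem_wordProducts_iff.mp
    (SLElementary.trailingBlock_subset_wordProducts_reductionWord 0 hg)

/-- For a commutative local ring `R̄` and `d ≥ 2`, there is a fixed sequence of
`M = (3d² − d − 2)/2` pairs of distinct indices such that every `g ∈ SL_d(R̄)` is a product
`E_{i₁j₁}(r₁) ⋯ E_{i_M j_M}(r_M)` for suitable ring elements `r_s`. -/
theorem bounded_elementary_generation_of_localRing (R : Type*) [CommRing R] [IsLocalRing R]
    (d : ℕ) (hd : 2 ≤ d) :
    ∃ f : Fin ((3 * d ^ 2 - d - 2) / 2) → {p : Fin d × Fin d // p.1 ≠ p.2},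
      ∀ g : Matrix.SpecialLinearGroup (Fin d) R,
        ∃ r : Fin ((3 * d ^ 2 - d - 2) / 2) → R,
          g = (List.ofFn fun s => elem (f s).1.1 (f s).1.2 (f s).2 (r s)).prod :=
  bounded_elementary_generation_of_localRing_general R d
end

section
/- Let R̄ be a finite commutative local ring which admits a surjective ring homomorphism from ℤ[x_1,…,x_k]. Then the maximal ideal Ī of R̄ is generated (as an ideal) by at most k + 1 elements. -/
/-!
Let `p` be the residue characteristic and `q = p ^ d` the size of the residue field. For a
suitable `N`, the elements `cᵢ = xᵢ ^ q ^ N` are fixed by `y ↦ y ^ q ^ N` and have the same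
residue as `xᵢ`, so `J = (p, x₁ - c₁, …, x_k - c_k)` lies in the maximal ideal. Modulo `J` the
ring has characteristic `p`, so `y ↦ y ^ q ^ N` is a ring endomorphism; it fixes the images of
the `cᵢ`, which generate `R ⧸ J` over `ℤ`, hence it is the identity and `R ⧸ J` is reduced.
Since the maximal ideal of a finite local ring is nil, it is contained in `J`.
-/

theorem exists_isIdempotentElem_pow {M : Type*} [Monoid M] [Finite M] (x : M) :
    ∃ n, 0 < n ∧ IsIdempotentElem (x ^ n) := by
  obtain ⟨i, j, hne, hij⟩ := Finite.exists_ne_map_eq_of_infinite (x ^ · : ℕ → M)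
  wlog hlt : i < j generalizing i j
  · exact this j i hne.symm hij.symm (by omega)
  set d := j - i
  have hperiod : ∀ t, x ^ (i + d * t) = x ^ i := by
    intro t
    induction t with
    | zero => simp
    | succ t ih =>
      rw [mul_add_one, ← add_assoc, pow_add, ih, ← pow_add, Nat.add_sub_of_le hlt.le]
      exact hij.symm
  have hd : 0 < d := by omega
  obtain ⟨r, hr⟩ : ∃ r, d * (i + 1) = i + r := Nat.exists_eq_add_of_le (by nlinarith)
  refine ⟨d * (i + 1), by positivity, ?_⟩
  calc x ^ (d * (i + 1)) * x ^ (d * (i + 1)) = x ^ (i + d * (i + 1)) * x ^ r := by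
        rw [← pow_add, ← pow_add]; congr 1; omega
    _ = x ^ (d * (i + 1)) := by rw [hperiod, ← pow_add, hr]

theorem exists_pow_pow_idempotent {M : Type*} [Monoid M] [Finite M] (q : ℕ) :
    ∃ N, 0 < N ∧ ∀ b : M, (b ^ q ^ N) ^ q ^ N = b ^ q ^ N := by
  have : Finite (Function.End M) := inferInstanceAs (Finite (M → M))
  obtain ⟨N, hN, hidem⟩ := exists_isIdempotentElem_pow (show Function.End M from (· ^ q))
  refine ⟨N, hN, fun b => ?_⟩
  have h := congrFun hidem b
  change (· ^ q)^[N] ((· ^ q)^[N] b) = (· ^ q)^[N] b at h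
  simpa only [pow_iterate] using h

theorem IsNilpotent.eq_zero_of_pow_eq_self {M : Type*} [MonoidWithZero M] {x : M}
    (hx : IsNilpotent x) {n : ℕ} (hn : 1 < n) (h : x ^ n = x) : x = 0 := by
  obtain ⟨t, ht⟩ := hx
  have hpow : ∀ s, x ^ (1 + (n - 1) * s) = x := by
    intro s
    induction s with
    | zero => simp
    | succ s ih =>
      rw [mul_add_one, ← add_assoc, pow_add, ih, ← pow_succ', Nat.sub_add_cancel hn.le, h]
  have : 1 ≤ n - 1 := by omega
  rw [← hpow t]
  exact pow_eq_zero_of_le (by nlinarith) ht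

theorem nilradical_le_of_forall_pow_eq_self {R : Type*} [CommRing R] (J : Ideal R) {n : ℕ}
    (hn : 1 < n) (h : ∀ a : R ⧸ J, a ^ n = a) : nilradical R ≤ J := fun _ hx =>
  Ideal.Quotient.eq_zero_iff_mem.mp <|
    (IsNilpotent.map hx (Ideal.Quotient.mk J)).eq_zero_of_pow_eq_self hn (h _)

theorem MvPolynomial.pow_eq_self_of_surjective {σ A : Type*} [CommRing A] (p e : ℕ)
    [ExpChar A p] {g : MvPolynomial σ ℤ →+* A} (hg : Function.Surjective g)
    (hX : ∀ i, g (X i) ^ p ^ e = g (X i)) (a : A) : a ^ p ^ e = a := by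
  have : (iterateFrobenius A p e).comp g = g := ringHom_ext (fun r => by simp) hX
  obtain ⟨P, rfl⟩ := hg a
  exact RingHom.congr_fun this P

theorem MvPolynomial.nilradical_le_span_prime_insert_X_sub {σ R : Type*} [CommRing R]
    {f : MvPolynomial σ ℤ →+* R} (hf : Function.Surjective f) {p : ℕ} (hp : p.Prime) {e : ℕ}
    (he : 0 < e) (c : σ → R) (hc : ∀ i, c i ^ p ^ e = c i) :
    nilradical R ≤ Ideal.span (insert (p : R) (Set.range fun i => f (X i) - c i)) := by
  set J := Ideal.span (insert (p : R) (Set.range fun i => f (X i) - c i))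
  rcases subsingleton_or_nontrivial (R ⧸ J) with h | h
  · exact (Ideal.Quotient.subsingleton_iff.mp h).symm ▸ le_top
  have : Fact p.Prime := ⟨hp⟩
  have : CharP (R ⧸ J) p := (CharP.charP_iff_prime_eq_zero hp).mpr <| by
    rw [← map_natCast (Ideal.Quotient.mk J), Ideal.Quotient.eq_zero_iff_mem]
    exact Ideal.subset_span (Set.mem_insert _ _)
  refine nilradical_le_of_forall_pow_eq_self J (Nat.one_lt_pow he.ne' hp.one_lt) <|
    pow_eq_self_of_surjective p e (g := (Ideal.Quotient.mk J).comp f)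
      (Ideal.Quotient.mk_surjective.comp hf) fun i => ?_
  have hXc : Ideal.Quotient.mk J (f (X i)) = Ideal.Quotient.mk J (c i) :=
    Ideal.Quotient.eq.mpr <| Ideal.subset_span <| Set.mem_insert_of_mem _ ⟨i, rfl⟩
  simp only [RingHom.comp_apply, hXc, ← map_pow, hc]

open MvPolynomial IsLocalRing in
/-- If a finite commutative local ring `R̄` is an image of `ℤ[x₁,…,x_k]`, then its maximal
ideal is generated by at most `k + 1` elements. -/
theorem maximalIdeal_fg_of_surjective_mvPolynomial (k : ℕ) (R : Type*) [CommRing R]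
    [Finite R] [IsLocalRing R]
    (hsurj : ∃ f : MvPolynomial (Fin k) ℤ →+* R, Function.Surjective f) :
    ∃ s : Finset R, s.card ≤ k + 1 ∧
      Ideal.span (s : Set R) = IsLocalRing.maximalIdeal R := by
  classical
  obtain ⟨f, hf⟩ := hsurj
  have : Fintype (ResidueField R) :=
    @Fintype.ofFinite _ (Finite.of_surjective _ residue_surjective)
  obtain ⟨p, _, d, hp, hcard⟩ := FiniteField.card' (ResidueField R)
  obtain ⟨N, hN, hidem⟩ := exists_pow_pow_idempotent (M := R) (Fintype.card (ResidueField R))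
  set c := fun i : Fin k => f (X i) ^ Fintype.card (ResidueField R) ^ N
  refine ⟨insert (p : R) (Finset.univ.image fun i => f (X i) - c i), ?_, le_antisymm ?_ ?_⟩
  · exact (Finset.card_insert_le _ _).trans
      (by simpa using Finset.card_image_le (s := (Finset.univ : Finset (Fin k))))
  · simp only [Finset.coe_insert, Finset.coe_image, Finset.coe_univ, Set.image_univ,
      Ideal.span_le, Set.insert_subset_iff, Set.range_subset_iff, SetLike.mem_coe,
      ← residue_eq_zero_iff, map_natCast, CharP.cast_eq_zero, true_and]
    intro i
    rw [map_sub, map_pow, FiniteField.pow_card_pow, sub_self]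
  · rw [← Ring.KrullDimLE.nilradical_eq_maximalIdeal]
    convert nilradical_le_span_prime_insert_X_sub hf hp (Nat.mul_pos d.pos hN) c
      (fun i => by rw [pow_mul, ← hcard, hidem]) using 2
    simp
end
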